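/- Let M be an atom-free MVS and f : X × X → M a quasimetric function. For each m ∈ M* define U_m = {(x,y) : f(x,y) ⊴ m}. Then the collection {U_m : m ∈ M*} satisfies the base axioms (UB1)–(UB3) for a quasiuniformity: each U_m contains the diagonal, for m1, m2 ∈ M* there is m3 ∈ M* with U_{m3} ⊆ U_{m1} ∩ U_{m2}, and for each m1 ∈ M* there is m2 ∈ M* with U_{m2} ∘ U_{m2} ⊆ U_{m1}. -/

import Mathlib

universe u v w

structure MVS (M : Type u) where
  add : M → M → M
  e : M
  assoc : ∀ a b c : M, add (add a b) c = add a (add b c)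
  add_e : ∀ a : M, add a e = a
  e_add : ∀ a : M, add e a = a
  eq_e_of_add_eq_e : ∀ a b : M, add a b = e → a = e ∧ b = e
  exists_common : ∀ a b : M, a ≠ e → b ≠ e →
    ∃ c, c ≠ e ∧ (∃ d, add c d = a) ∧ (∃ d, add c d = b)
  nontrivial : ∃ a : M, a ≠ e

variable {M : Type u} {X : Type v}

/-- `a ⊴ b` iff there is `c` with `a + c = b`. -/
def MVS.le (S : MVS M) (a b : M) : Prop := ∃ c, S.add a c = b

/-- `a ◁ b` iff there is `c ≠ e` with `a + c = b`. -/
def MVS.lt (S : MVS M) (a b : M) : Prop := ∃ c, c ≠ S.e ∧ S.add a c = b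

def MVS.Commutative (S : MVS M) : Prop := ∀ a b, S.add a b = S.add b a

/-- An MVS is atom-free if it is commutative and every `m ≠ e` admits `n ≠ e` with `n ◁ m`. -/
def MVS.AtomFree (S : MVS M) : Prop :=
  S.Commutative ∧ ∀ m, m ≠ S.e → ∃ n, n ≠ S.e ∧ S.lt n m

/-- A quasimetric function: triangle inequality and `f x x = e`. -/
def IsQuasimetric (S : MVS M) (f : X → X → M) : Prop :=
  (∀ x y z, S.le (f x z) (S.add (f x y) (f y z))) ∧ ∀ x, f x x = S.e

/-- Open ball `B_f(x,m) = {y | f x y ◁ m}`. -/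
def ball (S : MVS M) (f : X → X → M) (x : X) (m : M) : Set X := {y | S.lt (f x y) m}

/-- Closed ball `B̄_f(x,m) = {y | f x y ⊴ m}`. -/
def closedBall (S : MVS M) (f : X → X → M) (x : X) (m : M) : Set X := {y | S.le (f x y) m}

/-- The topology induced by a quasimetric function: open balls form a neighbourhood base. -/
def qTopology (S : MVS M) (f : X → X → M) : TopologicalSpace X :=
  TopologicalSpace.mkOfNhds fun x => ⨅ m ∈ {m : M | m ≠ S.e}, Filter.principal (ball S f x m)

/-- Entourage `U_m = {(x,y) | f x y ⊴ m}`. -/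
def ent (S : MVS M) (f : X → X → M) (m : M) : Set (X × X) := {p | S.le (f p.1 p.2) m}

/-- `qcomp A B = A ∘ B = {(x,z) | ∃ y, (x,y) ∈ B ∧ (y,z) ∈ A}`. -/
def qcomp (A B : Set (X × X)) : Set (X × X) := {p | ∃ y, (p.1, y) ∈ B ∧ (y, p.2) ∈ A}

def IsQuasiUniformity (U : Set (Set (X × X))) : Prop :=
  U.Nonempty ∧
  (∀ u ∈ U, ∀ x : X, (x, x) ∈ u) ∧
  (∀ u ∈ U, ∀ v : Set (X × X), u ⊆ v → v ∈ U) ∧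
  (∀ u ∈ U, ∀ v ∈ U, u ∩ v ∈ U) ∧
  (∀ u ∈ U, ∃ v ∈ U, qcomp v v ⊆ u)

def IsBaseOf (B U : Set (Set (X × X))) : Prop := B ⊆ U ∧ ∀ u ∈ U, ∃ b ∈ B, b ⊆ u

/-- `U + V` : the intersection of all entourages `U_n` containing `V ∘ U`. -/
def addEnt (S : MVS M) (f : X → X → M) (A B : Set (X × X)) : Set (X × X) :=
  ⋂₀ {w | (∃ m, ent S f m = w) ∧ qcomp B A ⊆ w}

/-- The topology induced by a base of a quasiuniformity: sections `U[x]` form a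
neighbourhood base. -/
def quTopology (B : Set (Set (X × X))) : TopologicalSpace X :=
  TopologicalSpace.mkOfNhds fun x => ⨅ u ∈ B, Filter.principal {y | (x, y) ∈ u}

/-- `n`-fold sum `m + ⋯ + m`. -/
def nfold (S : MVS M) : ℕ → M → M
  | 0, _ => S.e
  | Nat.succ n, m => S.add m (nfold S n m)

/-! The triangle inequality gives `U_n ∘ U_n ⊆ U_{n+n}`, so (UB3) reduces to finding `n ≠ e`
with `n + n ⊴ m`: atom-freeness splits `m = n + c` with `n, c ≠ e`, and a common lower bound
`p ≠ e` of `n` and `c` satisfies `p + p ⊴ n + c = m`. (UB2) is the common lower bound of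
`m₁` and `m₂` provided by the MVS axioms. -/

namespace MVS

variable (S : MVS M)

theorem e_le (m : M) : S.le S.e m := ⟨m, S.e_add m⟩

theorem le_trans {a b c : M} (hab : S.le a b) (hbc : S.le b c) : S.le a c := by
  obtain ⟨d, rfl⟩ := hab
  obtain ⟨d', rfl⟩ := hbc
  exact ⟨S.add d d', (S.assoc _ _ _).symm⟩

variable {S}

theorem Commutative.add_le_add (hc : S.Commutative) {a b a' b' : M}
    (h : S.le a b) (h' : S.le a' b') : S.le (S.add a a') (S.add b b') := by
  obtain ⟨d, rfl⟩ := h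
  obtain ⟨d', rfl⟩ := h'
  refine ⟨S.add d d', ?_⟩
  rw [S.assoc, ← S.assoc a' d d', hc a' d, S.assoc d a' d', ← S.assoc]

theorem AtomFree.exists_add_self_le (hAF : S.AtomFree) {m : M} (hm : m ≠ S.e) :
    ∃ p, p ≠ S.e ∧ S.le (S.add p p) m := by
  obtain ⟨n, hn, c, hc, rfl⟩ := hAF.2 m hm
  obtain ⟨p, hp, hpn, hpc⟩ := S.exists_common n c hn hc
  exact ⟨p, hp, hAF.1.add_le_add hpn hpc⟩

end MVS

section Entourage

variable {S : MVS M} {f : X → X → M}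

theorem ent_mono {m m' : M} (h : S.le m m') : ent S f m ⊆ ent S f m' :=
  fun _ hp => S.le_trans hp h

theorem IsQuasimetric.refl_mem_ent (hf : IsQuasimetric S f) (m : M) (x : X) :
    (x, x) ∈ ent S f m :=
  show S.le (f x x) m from hf.2 x ▸ S.e_le m

theorem IsQuasimetric.qcomp_ent_subset (hf : IsQuasimetric S f) (hc : S.Commutative)
    (m n : M) : qcomp (ent S f n) (ent S f m) ⊆ ent S f (S.add m n) := by
  rintro ⟨x, z⟩ ⟨y, hxy, hyz⟩
  exact S.le_trans (hf.1 x y z) (hc.add_le_add hxy hyz)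

end Entourage

theorem stmt_12 (S : MVS M) (hAF : S.AtomFree) (f : X → X → M)
    (hf : IsQuasimetric S f) :
    (∀ m : M, m ≠ S.e → ∀ x : X, (x, x) ∈ ent S f m) ∧
    (∀ m1 m2 : M, m1 ≠ S.e → m2 ≠ S.e →
      ∃ m3, m3 ≠ S.e ∧ ent S f m3 ⊆ ent S f m1 ∩ ent S f m2) ∧
    (∀ m1 : M, m1 ≠ S.e →
      ∃ m2, m2 ≠ S.e ∧ qcomp (ent S f m2) (ent S f m2) ⊆ ent S f m1) := by
  refine ⟨fun m _ => hf.refl_mem_ent m, fun m1 m2 h1 h2 => ?_, fun m1 h1 => ?_⟩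
  · obtain ⟨m3, hm3, hle1, hle2⟩ := S.exists_common m1 m2 h1 h2
    exact ⟨m3, hm3, Set.subset_inter (ent_mono hle1) (ent_mono hle2)⟩
  · obtain ⟨m2, hm2, hle⟩ := hAF.exists_add_self_le h1
    exact ⟨m2, hm2, (hf.qcomp_ent_subset hAF.1 m2 m2).trans (ent_mono hle)⟩
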